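/- For every n=(n₁,n₂,n₃)∈ℤ³ with all nᵢ≥1 and every triangle △ of the three-directional grid G, the number of lattice translates active on △ is φ(n) = n₁n₂ + n₁n₃ + n₂n₃; that is, the set {v∈ℤ² : B_n(·−v) does not vanish identically on △} has exactly n₁n₂ + n₁n₃ + n₂n₃ elements. -/

import Mathlib

/- ## The three-directional (type-I) grid -/

noncomputable section

open MvPolynomial Set Function

/-- Points of the plane. -/
abbrev Pt := ℝ × ℝ

/-- Bivariate real polynomials `ℝ[x,y]`. -/
abbrev BPoly := MvPolynomial (Fin 2) ℝ

/-- Evaluation of a bivariate polynomial at a point of the plane. -/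
def evalP (q : BPoly) (p : Pt) : ℝ := MvPolynomial.eval ![p.1, p.2] q

/-- Triangles of the three-directional grid `G`:  `⟨v, false⟩` is the "lower"
triangle with vertices `v, v+(1,0), v+(1,1)`, and `⟨v, true⟩` is the "upper"
triangle with vertices `v, v+(0,1), v+(1,1)`. -/
structure Tri where
  v : ℤ × ℤ
  up : Bool
deriving DecidableEq

namespace Tri

/-- The open triangle in the plane realizing a combinatorial triangle. -/
def toSet (T : Tri) : Set Pt :=
  if T.up then
    {p | (T.v.1 : ℝ) < p.1 ∧ p.1 - (T.v.1 : ℝ) < p.2 - (T.v.2 : ℝ) ∧ p.2 < (T.v.2 : ℝ) + 1}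
  else
    {p | (T.v.2 : ℝ) < p.2 ∧ p.2 - (T.v.2 : ℝ) < p.1 - (T.v.1 : ℝ) ∧ p.1 < (T.v.1 : ℝ) + 1}

/-- The closed triangle. -/
def cl (T : Tri) : Set Pt := closure T.toSet

/-- The three lattice vertices of a triangle. -/
def vertices (T : Tri) : Finset (ℤ × ℤ) :=
  if T.up then {T.v, (T.v.1, T.v.2 + 1), (T.v.1 + 1, T.v.2 + 1)}
  else {T.v, (T.v.1 + 1, T.v.2), (T.v.1 + 1, T.v.2 + 1)}

end Tri

/-- Edges of the grid: a lattice point together with a direction type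
(`0 ↦ e₁ = (1,0)`, `1 ↦ e₂ = (0,1)`, `2 ↦ e₃ = (1,1)`); the edge of type `i`
at `v` joins `v` to `v + eᵢ`. -/
abbrev Edge := (ℤ × ℤ) × Fin 3

/-- The three direction vectors `e₁, e₂, e₃`. -/
def dirZ : Fin 3 → ℤ × ℤ := ![(1, 0), (0, 1), (1, 1)]

/-- The three edges of a triangle. -/
def Tri.edges (T : Tri) : Finset Edge :=
  if T.up then {((T.v.1, T.v.2 + 1), 0), (T.v, 1), (T.v, 2)}
  else {(T.v, 0), ((T.v.1 + 1, T.v.2), 1), (T.v, 2)}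

/-- The open segment realizing an edge. -/
def Edge.seg (ε : Edge) : Set Pt :=
  {p | ∃ t : ℝ, 0 < t ∧ t < 1 ∧
    p = ((ε.1.1 : ℝ) + t * ((dirZ ε.2).1 : ℝ), (ε.1.2 : ℝ) + t * ((dirZ ε.2).2 : ℝ))}

/-- `M*`: the union of the closed triangles of a multicell domain. -/
def Mstar (M : Finset Tri) : Set Pt := ⋃ T ∈ M, T.cl

/-- `ℙ(M,V)`: continuous functions on `M*` whose restriction to each triangle
of `M` is the restriction of a polynomial in `V`. -/
def PP (M : Finset Tri) (V : Set BPoly) : Set (Pt → ℝ) :=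
  {f | ContinuousOn f (Mstar M) ∧ ∀ T ∈ M, ∃ q ∈ V, EqOn f (evalP q) T.toSet}

/-- The diamond of an edge: union of the closed triangles of `M` having `ε`
as an edge. -/
def diamond (M : Finset Tri) (ε : Edge) : Set Pt :=
  ⋃ T ∈ M.filter (fun T => ε ∈ T.edges), T.cl

/-- The spline space with edge smoothness `d` on the multicell domain `M`:
piecewise polynomials (pieces from `V`) which are `C^{dᵢ}` on the diamond of
every edge of type `i` of `M`. -/
def SplineSpace (M : Finset Tri) (V : Set BPoly) (d : Fin 3 → ℕ) : Set (Pt → ℝ) :=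
  {f | f ∈ PP M V ∧
    ∀ ε : Edge, (∃ T ∈ M, ε ∈ T.edges) → ContDiffOn ℝ (d ε.2) f (diamond M ε)}

/-- Directional derivative of a polynomial along an integer vector. -/
def dirD (e : ℤ × ℤ) (q : BPoly) : BPoly :=
  (e.1 : ℝ) • MvPolynomial.pderiv (0 : Fin 2) q + (e.2 : ℝ) • MvPolynomial.pderiv (1 : Fin 2) q

/-- The mixed directional derivative operator
`D_s = (∂_{e₁})^{s₁} (∂_{e₂})^{s₂} (∂_{e₃})^{s₃}`. -/
def Dmix (s : Fin 3 → ℕ) (q : BPoly) : BPoly :=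
  (dirD (dirZ 0))^[s 0] ((dirD (dirZ 1))^[s 1] ((dirD (dirZ 2))^[s 2] q))

/-- The index sets `Iᵢ^d`; `I₁^d = {s | s₂+s₃ ≤ d₁}` and cyclically. -/
def Iset (d : Fin 3 → ℕ) (i : Fin 3) : Set (Fin 3 → ℕ) :=
  {s | s (i + 1) + s (i + 2) ≤ d i}

/-- Two triangles of the grid are adjacent if they are distinct and share an edge. -/
def Adj (T T' : Tri) : Prop := T ≠ T' ∧ ∃ ε : Edge, ε ∈ T.edges ∧ ε ∈ T'.edges

/-- `c` is an edge-connected chain of length `m` from `T` to `T'`. -/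
def TriIsChain (T T' : Tri) (m : ℕ) (c : ℕ → Tri) : Prop :=
  c 0 = T ∧ c m = T' ∧ ∀ k < m, Adj (c k) (c (k + 1))

/-- The set of types of the edges crossed by a chain. -/
def chainTypes (m : ℕ) (c : ℕ → Tri) : Set (Fin 3) :=
  {i | ∃ k < m, ∃ ε : Edge, ε.2 = i ∧ ε ∈ (c k).edges ∧ ε ∈ (c (k + 1)).edges}

/-- Minimal length of an edge-connected chain between two triangles. -/
def minLen (T T' : Tri) : ℕ := sInf {m | ∃ c, TriIsChain T T' m c}

/-- The smoothness type `SmType(△,△')`: the types of the edges crossed by a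
shortest edge-connected chain from `△` to `△'`. -/
def SmType (T T' : Tri) : Set (Fin 3) :=
  {i | ∃ c, TriIsChain T T' (minLen T T') c ∧ i ∈ chainTypes (minLen T T') c}

/-- `q` is the polynomial piece of `f` on the triangle `T`. -/
def IsPiece (f : Pt → ℝ) (T : Tri) (q : BPoly) : Prop := EqOn f (evalP q) T.toSet

/-- The strongly regular spline space `Ŝ^d(M,V)`: piecewise polynomials such
that for any two triangles of `M` with intersecting closures, the derivatives
`D_s`, `s ∈ ⋂_{i ∈ SmType(△,△')} Iᵢ^d`, of the two polynomial pieces agree on the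
intersection of the closures (i.e. `D_s f` is continuous there). -/
def StrongSpline (M : Finset Tri) (V : Set BPoly) (d : Fin 3 → ℕ) : Set (Pt → ℝ) :=
  {f | f ∈ PP M V ∧
    ∀ T ∈ M, ∀ T' ∈ M, (T.cl ∩ T'.cl).Nonempty →
      ∀ s : Fin 3 → ℕ, (∀ i ∈ SmType T T', s ∈ Iset d i) →
        ∀ q q' : BPoly, IsPiece f T q → IsPiece f T' q' →
          ∀ x ∈ T.cl ∩ T'.cl, evalP (Dmix s q) x = evalP (Dmix s q') x}

/-- Kissing triangles: the closures intersect in exactly one point. -/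
def Kissing (T T' : Tri) : Prop := ∃ p : Pt, T.cl ∩ T'.cl = {p}

/-- An over-concave vertex of `M`: exactly one triangle of `star(ν)` is
missing from `M`. -/
def OverConcave (M : Finset Tri) (ν : ℤ × ℤ) : Prop :=
  ∃! T : Tri, ν ∈ T.vertices ∧ T ∉ M

/- ## Type-I box splines -/

/-- The Courant hat function `B_{(1,1,1)}`: the piecewise linear function on
`G` supported on `star((1,1))` with value `1` at `(1,1)` and `0` at all other
lattice points. -/
def hat (p : Pt) : ℝ :=
  max 0 (min (min (min p.1 p.2) (min (2 - p.1) (2 - p.2)))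
             (min (1 - (p.1 - p.2)) (1 + (p.1 - p.2))))

/-- The type-I box spline `B_{(n₁,n₂,n₃)}`, defined by repeated directional
convolution starting from the Courant hat function (the result is independent
of the order of the convolutions); junk value `0` if some `nᵢ = 0`. -/
noncomputable def boxN : ℕ → ℕ → ℕ → Pt → ℝ
  | 0, _, _, _ => 0
  | _ + 1, 0, _, _ => 0
  | _ + 1, _ + 1, 0, _ => 0
  | 1, 1, 1, p => hat p
  | a + 2, b + 1, c + 1, p =>
      ∫ t in (0:ℝ)..1, boxN (a + 1) (b + 1) (c + 1) (p.1 - t, p.2)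
  | 1, b + 2, c + 1, p =>
      ∫ t in (0:ℝ)..1, boxN 1 (b + 1) (c + 1) (p.1, p.2 - t)
  | 1, 1, c + 2, p =>
      ∫ t in (0:ℝ)..1, boxN 1 1 (c + 1) (p.1 - t, p.2 - t)
  termination_by a b c _ => a + b + c
  decreasing_by all_goals omega

/-- The translate `B_n(· - w)` of the box spline. -/
def trBox (n₁ n₂ n₃ : ℕ) (w : ℤ × ℤ) (p : Pt) : ℝ :=
  boxN n₁ n₂ n₃ (p.1 - (w.1 : ℝ), p.2 - (w.2 : ℝ))

/-- `Supp_n(△̂)`: lattice translates of `B_n` that do not vanish identically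
on the triangle `T`. -/
def activeSet (n₁ n₂ n₃ : ℕ) (T : Tri) : Set (ℤ × ℤ) :=
  {w | ¬ ∀ p ∈ T.toSet, trBox n₁ n₂ n₃ w p = 0}

/-- `c` is the coefficient vector of the polynomial `q` with respect to the
active box-spline translates on `T`:  `q|_T = Σ_β λ_T^β(q)·β|_T`. -/
def Represents (n₁ n₂ n₃ : ℕ) (T : Tri) (q : BPoly) (c : (ℤ × ℤ) →₀ ℝ) : Prop :=
  ↑c.support ⊆ activeSet n₁ n₂ n₃ T ∧
    ∀ p ∈ T.toSet, evalP q p = c.sum fun w a => a * trBox n₁ n₂ n₃ w p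

/-- `V_n` (relative to the triangle `T`): polynomials whose restriction to `T`
is a linear combination of the active box-spline translates on `T`. -/
def VSpace (n₁ n₂ n₃ : ℕ) (T : Tri) : Set BPoly :=
  {q | ∃ c, Represents n₁ n₂ n₃ T q c}


/-!
Induction along the recursive definition shows that `B_n` is continuous, nonnegative and
supported exactly on the open zonotope: averaging such a function along a segment `[0, e]`
yields one supported on the Minkowski sum of the old support with the open segment `(0, e)`.
The open zonotope is cut out by strict inequalities with integer bounds on the grid functionals
`x`, `y`, `x - y`, while on an open triangle of `G` each of these functionals stays strictly
between two consecutive integers. So whether `p - w` lies in the zonotope does not depend on the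
point `p` of the triangle, and the active translates are the lattice points of a half-open
hexagon with side lengths `n₁, n₂, n₃` (for upper triangles, the point reflection of the one for
lower triangles), which splits into three half-open parallelograms with `n₁n₂`, `n₁n₃` and
`n₂n₃` lattice points.
-/

structure IsBumpOn {E : Type*} [TopologicalSpace E] (f : E → ℝ) (U : Set E) : Prop where
  continuous : Continuous f
  nonneg : 0 ≤ f
  support_eq : support f = U

lemma Continuous.intervalIntegral_pos_of_ne_zero {φ : ℝ → ℝ} (hφ : Continuous φ) (h0 : 0 ≤ φ)
    {a b t₀ : ℝ} (ht₀ : t₀ ∈ Ioo a b) (hpos : φ t₀ ≠ 0) :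
    0 < ∫ t in a..b, φ t := by
  rw [intervalIntegral.integral_pos_iff_support_of_nonneg_ae (.of_forall h0)
    (hφ.intervalIntegrable a b)]
  refine ⟨ht₀.1.trans ht₀.2, ?_⟩
  calc (0 : ENNReal) < MeasureTheory.volume (support φ ∩ Ioo a b) :=
        (hφ.isOpen_support.inter isOpen_Ioo).measure_pos _ ⟨t₀, hpos, ht₀⟩
    _ ≤ _ := MeasureTheory.measure_mono (inter_subset_inter_right _ Ioo_subset_Ioc_self)

section Smoothing

variable {E : Type*} [TopologicalSpace E] [AddCommGroup E] [Module ℝ E]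
  [IsTopologicalAddGroup E] [ContinuousSMul ℝ E]

lemma IsBumpOn.intervalIntegral_sub_smul {g : E → ℝ} {U : Set E} (hg : IsBumpOn g U) (e : E) :
    IsBumpOn (fun p => ∫ t in (0 : ℝ)..1, g (p - t • e))
      {p | ∃ t ∈ Ioo (0 : ℝ) 1, p - t • e ∈ U} := by
  have hcont := hg.continuous
  have hnonneg : ∀ p, 0 ≤ ∫ t in (0 : ℝ)..1, g (p - t • e) := fun p =>
    intervalIntegral.integral_nonneg zero_le_one fun t _ => hg.nonneg _
  refine ⟨by fun_prop, hnonneg, ?_⟩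
  ext p
  rw [mem_support, ← hg.support_eq]
  constructor
  · intro hne
    by_contra hzero
    simp only [mem_ofPred_eq, not_exists, not_and] at hzero
    refine hne ?_
    rw [intervalIntegral.integral_of_le zero_le_one, MeasureTheory.integral_Ioc_eq_integral_Ioo]
    exact MeasureTheory.setIntegral_eq_zero_of_forall_eq_zero fun t ht =>
      notMem_support.mp (hzero t ht)
  · rintro ⟨t₀, ht₀, hmem⟩
    exact (Continuous.intervalIntegral_pos_of_ne_zero (φ := fun t => g (p - t • e))
      (by fun_prop) (fun t => hg.nonneg _) ht₀ hmem).ne'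

end Smoothing

/-- The interior of the zonotope `n₁ [0, e₁] + n₂ [0, e₂] + n₃ [0, e₃]`. -/
def openZonotope (n₁ n₂ n₃ : ℕ) : Set Pt :=
  {p | p.1 ∈ Ioo 0 ((n₁ : ℝ) + n₃) ∧ p.2 ∈ Ioo 0 ((n₂ : ℝ) + n₃) ∧
    p.1 - p.2 ∈ Ioo (-(n₂ : ℝ)) n₁}

lemma openZonotope_add_segment_e₁ {a b c : ℕ} (ha : 0 < a) :
    {p : Pt | ∃ t ∈ Ioo (0 : ℝ) 1, p - t • ((1, 0) : Pt) ∈ openZonotope a b c} =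
      openZonotope (a + 1) b c := by
  ext ⟨x, y⟩
  simp only [openZonotope, mem_ofPred_eq, mem_Ioo, Prod.fst_sub, Prod.snd_sub, Prod.smul_mk,
    smul_eq_mul, mul_one, mul_zero, sub_zero]
  have ha' : (0 : ℝ) < a := Nat.cast_pos.mpr ha
  push_cast
  constructor
  · rintro ⟨t, ⟨ht₀, ht₁⟩, ⟨h₁, h₂⟩, ⟨h₃, h₄⟩, ⟨h₅, h₆⟩⟩
    refine ⟨⟨?_, ?_⟩, ⟨?_, ?_⟩, ⟨?_, ?_⟩⟩ <;> linarith
  · rintro ⟨⟨h₁, h₂⟩, ⟨h₃, h₄⟩, ⟨h₅, h₆⟩⟩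
    obtain ⟨t, hlo, hhi⟩ := exists_between
      (show max (max 0 (x - a - c)) (x - y - a) < min (min 1 x) (x - y + b) by
        simp only [max_lt_iff, lt_min_iff]; and_intros <;> linarith)
    simp only [max_lt_iff, lt_min_iff] at hlo hhi
    refine ⟨t, ⟨?_, ?_⟩, ⟨?_, ?_⟩, ⟨?_, ?_⟩, ⟨?_, ?_⟩⟩ <;> linarith

lemma openZonotope_add_segment_e₂ {a b c : ℕ} (hb : 0 < b) :
    {p : Pt | ∃ t ∈ Ioo (0 : ℝ) 1, p - t • ((0, 1) : Pt) ∈ openZonotope a b c} =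
      openZonotope a (b + 1) c := by
  ext ⟨x, y⟩
  simp only [openZonotope, mem_ofPred_eq, mem_Ioo, Prod.fst_sub, Prod.snd_sub, Prod.smul_mk,
    smul_eq_mul, mul_one, mul_zero, sub_zero]
  have hb' : (0 : ℝ) < b := Nat.cast_pos.mpr hb
  push_cast
  constructor
  · rintro ⟨t, ⟨ht₀, ht₁⟩, ⟨h₁, h₂⟩, ⟨h₃, h₄⟩, ⟨h₅, h₆⟩⟩
    refine ⟨⟨?_, ?_⟩, ⟨?_, ?_⟩, ⟨?_, ?_⟩⟩ <;> linarith
  · rintro ⟨⟨h₁, h₂⟩, ⟨h₃, h₄⟩, ⟨h₅, h₆⟩⟩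
    obtain ⟨t, hlo, hhi⟩ := exists_between
      (show max (max 0 (y - b - c)) (y - x - b) < min (min 1 y) (y - x + a) by
        simp only [max_lt_iff, lt_min_iff]; and_intros <;> linarith)
    simp only [max_lt_iff, lt_min_iff] at hlo hhi
    refine ⟨t, ⟨?_, ?_⟩, ⟨?_, ?_⟩, ⟨?_, ?_⟩, ⟨?_, ?_⟩⟩ <;> linarith

lemma openZonotope_add_segment_e₃ {a b c : ℕ} (hc : 0 < c) :
    {p : Pt | ∃ t ∈ Ioo (0 : ℝ) 1, p - t • ((1, 1) : Pt) ∈ openZonotope a b c} =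
      openZonotope a b (c + 1) := by
  ext ⟨x, y⟩
  simp only [openZonotope, mem_ofPred_eq, mem_Ioo, Prod.fst_sub, Prod.snd_sub, Prod.smul_mk,
    smul_eq_mul, mul_one, sub_sub_sub_cancel_right]
  have hc' : (0 : ℝ) < c := Nat.cast_pos.mpr hc
  push_cast
  constructor
  · rintro ⟨t, ⟨ht₀, ht₁⟩, ⟨h₁, h₂⟩, ⟨h₃, h₄⟩, ⟨h₅, h₆⟩⟩
    refine ⟨⟨?_, ?_⟩, ⟨?_, ?_⟩, ⟨?_, ?_⟩⟩ <;> linarith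
  · rintro ⟨⟨h₁, h₂⟩, ⟨h₃, h₄⟩, ⟨h₅, h₆⟩⟩
    obtain ⟨t, hlo, hhi⟩ := exists_between
      (show max (max 0 (x - a - c)) (y - b - c) < min (min 1 x) y by
        simp only [max_lt_iff, lt_min_iff]; and_intros <;> linarith)
    simp only [max_lt_iff, lt_min_iff] at hlo hhi
    refine ⟨t, ⟨?_, ?_⟩, ⟨?_, ?_⟩, ⟨?_, ?_⟩, ⟨?_, ?_⟩⟩ <;> linarith

lemma isBumpOn_hat : IsBumpOn hat (openZonotope 1 1 1) := by
  refine ⟨by unfold hat; fun_prop, fun p => le_max_left _ _, ?_⟩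
  ext ⟨x, y⟩
  have hmax : ∀ m : ℝ, max 0 m ≠ 0 ↔ 0 < m := fun m => by
    rcases le_or_gt m 0 with hm | hm
    · simp [max_eq_left hm, hm.not_gt]
    · simp [max_eq_right hm.le, hm.ne', hm]
  simp only [mem_support, hat, hmax, lt_min_iff, openZonotope, mem_ofPred_eq, mem_Ioo]
  push_cast
  constructor
  · rintro ⟨⟨⟨h₁, h₂⟩, h₃, h₄⟩, h₅, h₆⟩
    refine ⟨⟨?_, ?_⟩, ⟨?_, ?_⟩, ⟨?_, ?_⟩⟩ <;> linarith
  · rintro ⟨⟨h₁, h₂⟩, ⟨h₃, h₄⟩, ⟨h₅, h₆⟩⟩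
    refine ⟨⟨⟨?_, ?_⟩, ?_, ?_⟩, ?_, ?_⟩ <;> linarith

theorem isBumpOn_boxN :
    ∀ {n₁ n₂ n₃ : ℕ}, 1 ≤ n₁ → 1 ≤ n₂ → 1 ≤ n₃ →
      IsBumpOn (boxN n₁ n₂ n₃) (openZonotope n₁ n₂ n₃)
  | 1, 1, 1, _, _, _ => by
    convert isBumpOn_hat using 1
    funext p
    rw [boxN]
  | a + 2, b + 1, c + 1, _, _, _ => by
    have h := (isBumpOn_boxN (n₁ := a + 1) (n₂ := b + 1) (n₃ := c + 1) (by omega) (by omega)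
      (by omega)).intervalIntegral_sub_smul ((1, 0) : Pt)
    rw [openZonotope_add_segment_e₁ a.succ_pos] at h
    convert h using 1
    funext ⟨x, y⟩
    rw [boxN]
    simp
  | 1, b + 2, c + 1, _, _, _ => by
    have h := (isBumpOn_boxN (n₁ := 1) (n₂ := b + 1) (n₃ := c + 1) (by omega) (by omega)
      (by omega)).intervalIntegral_sub_smul ((0, 1) : Pt)
    rw [openZonotope_add_segment_e₂ b.succ_pos] at h
    convert h using 1
    funext ⟨x, y⟩
    rw [boxN]
    simp
  | 1, 1, c + 2, _, _, _ => by
    have h := (isBumpOn_boxN (n₁ := 1) (n₂ := 1) (n₃ := c + 1) (by omega) (by omega)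
      (by omega)).intervalIntegral_sub_smul ((1, 1) : Pt)
    rw [openZonotope_add_segment_e₃ c.succ_pos] at h
    convert h using 1
    funext ⟨x, y⟩
    rw [boxN]
    simp
termination_by n₁ n₂ n₃ => n₁ + n₂ + n₃

def latticeHexagon (n₁ n₂ n₃ : ℕ) (δ : ℤ) : Finset (ℤ × ℤ) :=
  (Finset.Ico 0 ((n₁ : ℤ) + n₃) ×ˢ Finset.Ico 0 ((n₂ : ℤ) + n₃)).filter
    fun u => u.1 - u.2 - δ ∈ Ico (-(n₂ : ℤ)) n₁

/-- The hexagon splits into three half-open parallelograms, spanned by `(e₁, e₂)`, `(e₁, e₃)`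
and `(e₂, e₃)`. -/
lemma card_latticeHexagon_zero (n₁ n₂ n₃ : ℕ) :
    (latticeHexagon n₁ n₂ n₃ 0).card = n₁ * n₂ + n₁ * n₃ + n₂ * n₃ := by
  set H := latticeHexagon n₁ n₂ n₃ 0
  set Q := H.filter fun u : ℤ × ℤ => ¬((n₃ : ℤ) ≤ u.1 ∧ (n₃ : ℤ) ≤ u.2)
  have h₁₂ : (H.filter fun u : ℤ × ℤ => (n₃ : ℤ) ≤ u.1 ∧ (n₃ : ℤ) ≤ u.2).card = n₁ * n₂ := by
    rw [show (H.filter fun u : ℤ × ℤ => (n₃ : ℤ) ≤ u.1 ∧ (n₃ : ℤ) ≤ u.2) =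
        Finset.Ico (n₃ : ℤ) (n₁ + n₃) ×ˢ Finset.Ico (n₃ : ℤ) (n₂ + n₃) by
      ext u
      simp only [H, latticeHexagon, Finset.mem_filter, Finset.mem_product, Finset.mem_Ico,
        mem_Ico]
      omega]
    simp
  have h₁₃ : (Q.filter fun u => u.2 ≤ u.1).card = n₁ * n₃ := by
    refine (Finset.card_nbij' (t := Finset.Ico (0 : ℤ) n₁ ×ˢ Finset.Ico (0 : ℤ) n₃)
      (fun u => (u.1 - u.2, u.2)) (fun d => (d.1 + d.2, d.2)) ?_ ?_ ?_ ?_).trans (by simp) <;>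
      intro u hu <;>
      simp only [Q, H, latticeHexagon, Finset.coe_filter, Finset.coe_product, Finset.coe_Ico,
        Finset.mem_filter, Finset.mem_product, Finset.mem_Ico, mem_prod, mem_Ico, mem_ofPred_eq,
        Prod.ext_iff, and_true] at hu ⊢ <;> omega
  have h₂₃ : (Q.filter fun u => ¬u.2 ≤ u.1).card = n₂ * n₃ := by
    refine (Finset.card_nbij' (t := Finset.Ico (1 : ℤ) (n₂ + 1) ×ˢ Finset.Ico (0 : ℤ) n₃)
      (fun u => (u.2 - u.1, u.1)) (fun d => (d.2, d.1 + d.2)) ?_ ?_ ?_ ?_).trans (by simp) <;>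
      intro u hu <;>
      simp only [Q, H, latticeHexagon, Finset.coe_filter, Finset.coe_product, Finset.coe_Ico,
        Finset.mem_filter, Finset.mem_product, Finset.mem_Ico, mem_prod, mem_Ico, mem_ofPred_eq,
        Prod.ext_iff, true_and, and_true] at hu ⊢ <;> omega
  rw [← Finset.card_filter_add_card_filter_not (s := H)
      (fun u : ℤ × ℤ => (n₃ : ℤ) ≤ u.1 ∧ (n₃ : ℤ) ≤ u.2),
    ← Finset.card_filter_add_card_filter_not (s := Q) (fun u : ℤ × ℤ => u.2 ≤ u.1),
    h₁₂, h₁₃, h₂₃, add_assoc]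

lemma card_latticeHexagon_one (n₁ n₂ n₃ : ℕ) :
    (latticeHexagon n₁ n₂ n₃ 1).card = (latticeHexagon n₁ n₂ n₃ 0).card := by
  let σ : ℤ × ℤ → ℤ × ℤ := fun u => (n₁ + n₃ - 1 - u.1, n₂ + n₃ - 1 - u.2)
  refine Finset.card_nbij' σ σ ?_ ?_ ?_ ?_ <;> intro u hu <;>
    simp only [σ, latticeHexagon, Finset.coe_filter, Finset.mem_product, Finset.mem_Ico,
      mem_Ico, mem_ofPred_eq, Prod.ext_iff] at hu ⊢ <;> omega

lemma card_latticeHexagon_toNat (n₁ n₂ n₃ : ℕ) (b : Bool) :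
    (latticeHexagon n₁ n₂ n₃ b.toNat).card = n₁ * n₂ + n₁ * n₃ + n₂ * n₃ := by
  cases b
  · exact card_latticeHexagon_zero n₁ n₂ n₃
  · rw [Bool.toNat_true, Nat.cast_one, card_latticeHexagon_one, card_latticeHexagon_zero]

lemma intCast_add_mem_Ioo_iff {a b k : ℤ} {s : ℝ} (hs : s ∈ Ioo (0 : ℝ) 1) :
    (k : ℝ) + s ∈ Ioo (a : ℝ) b ↔ k ∈ Ico a b := by
  obtain ⟨hs₀, hs₁⟩ := hs
  simp only [mem_Ioo, mem_Ico]
  constructor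
  · rintro ⟨ha, hb⟩
    have ha' : a < k + 1 := by exact_mod_cast (by linarith : (a : ℝ) < k + 1)
    have hb' : k < b := by exact_mod_cast (by linarith : (k : ℝ) < b)
    omega
  · rintro ⟨ha, hb⟩
    have ha' : (a : ℝ) ≤ k := by exact_mod_cast ha
    have hb' : (k : ℝ) + 1 ≤ b := by exact_mod_cast hb
    constructor <;> linarith

lemma Tri.toSet_nonempty (T : Tri) : T.toSet.Nonempty := by
  obtain ⟨v, up⟩ := T
  cases up
  · exact ⟨(v.1 + 2 / 3, v.2 + 1 / 3), by simp only [Tri.toSet]; norm_num⟩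
  · exact ⟨(v.1 + 1 / 3, v.2 + 2 / 3), by simp only [Tri.toSet]; norm_num⟩

lemma Tri.sub_v_mem_Ioo {T : Tri} {p : Pt} (hp : p ∈ T.toSet) :
    p.1 - T.v.1 ∈ Ioo (0 : ℝ) 1 ∧ p.2 - T.v.2 ∈ Ioo (0 : ℝ) 1 ∧
      p.1 - T.v.1 - (p.2 - T.v.2) + T.up.toNat ∈ Ioo (0 : ℝ) 1 := by
  obtain ⟨v, up⟩ := T
  cases up <;>
  · simp only [Tri.toSet, Bool.false_eq_true, if_true, if_false, mem_ofPred_eq] at hp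
    obtain ⟨h₁, h₂, h₃⟩ := hp
    simp only [mem_Ioo, Bool.toNat_false, Bool.toNat_true, Nat.cast_zero, Nat.cast_one]
    refine ⟨⟨?_, ?_⟩, ⟨?_, ?_⟩, ⟨?_, ?_⟩⟩ <;> linarith

lemma mem_openZonotope_sub_iff {T : Tri} {p : Pt} (hp : p ∈ T.toSet) (n₁ n₂ n₃ : ℕ)
    (w : ℤ × ℤ) :
    ((p.1 - w.1, p.2 - w.2) : Pt) ∈ openZonotope n₁ n₂ n₃ ↔
      T.v - w ∈ latticeHexagon n₁ n₂ n₃ T.up.toNat := by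
  obtain ⟨hs, ht, hr⟩ := Tri.sub_v_mem_Ioo hp
  have hx : p.1 - w.1 = ((T.v - w).1 : ℤ) + (p.1 - T.v.1) := by
    simp only [Prod.fst_sub]; push_cast; ring
  have hy : p.2 - w.2 = ((T.v - w).2 : ℤ) + (p.2 - T.v.2) := by
    simp only [Prod.snd_sub]; push_cast; ring
  have hxy : p.1 - w.1 - (p.2 - w.2) = ((T.v - w).1 : ℝ) - (T.v - w).2 - T.up.toNat +
      (p.1 - T.v.1 - (p.2 - T.v.2) + T.up.toNat) := by
    simp only [Prod.fst_sub, Prod.snd_sub]; push_cast; ring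
  have h₁ := intCast_add_mem_Ioo_iff (a := 0) (b := n₁ + n₃) (k := (T.v - w).1) hs
  have h₂ := intCast_add_mem_Ioo_iff (a := 0) (b := n₂ + n₃) (k := (T.v - w).2) ht
  have h₃ := intCast_add_mem_Ioo_iff (a := -n₂) (b := n₁)
    (k := (T.v - w).1 - (T.v - w).2 - T.up.toNat) hr
  push_cast at h₁ h₂ h₃
  simp only [openZonotope, mem_ofPred_eq, latticeHexagon, Finset.mem_filter, Finset.mem_product]
  rw [hxy, hx, hy, h₁, h₂, h₃]
  simp only [mem_Ico, Finset.mem_Ico, and_assoc]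

lemma activeSet_eq_map {n₁ n₂ n₃ : ℕ} (h₁ : 1 ≤ n₁) (h₂ : 1 ≤ n₂) (h₃ : 1 ≤ n₃) (T : Tri) :
    activeSet n₁ n₂ n₃ T =
      ((latticeHexagon n₁ n₂ n₃ T.up.toNat).map (Equiv.subLeft T.v).toEmbedding :
        Set (ℤ × ℤ)) := by
  obtain ⟨p₀, hp₀⟩ := T.toSet_nonempty
  ext w
  have hactive : ∀ p ∈ T.toSet,
      trBox n₁ n₂ n₃ w p ≠ 0 ↔ T.v - w ∈ latticeHexagon n₁ n₂ n₃ T.up.toNat := fun p hp => by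
    rw [trBox, ← mem_support, (isBumpOn_boxN h₁ h₂ h₃).support_eq, mem_openZonotope_sub_iff hp]
  rw [Finset.mem_coe, Finset.mem_map_equiv, Equiv.subLeft_symm_apply, neg_add_eq_sub]
  simp only [activeSet, mem_ofPred_eq, not_forall, ← ne_eq]
  exact ⟨fun ⟨p, hp, hne⟩ => (hactive p hp).mp hne, fun h => ⟨p₀, hp₀, (hactive p₀ hp₀).mpr h⟩⟩

/-- For all `nᵢ ≥ 1` and every triangle `△` of `G`, exactly
`φ(n) = n₁n₂ + n₁n₃ + n₂n₃` lattice translates of `B_n` are active on `△`. -/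
theorem statement9 (n₁ n₂ n₃ : ℕ) (h₁ : 1 ≤ n₁) (h₂ : 1 ≤ n₂) (h₃ : 1 ≤ n₃)
    (T : Tri) :
    (activeSet n₁ n₂ n₃ T).Finite ∧
    (activeSet n₁ n₂ n₃ T).ncard = n₁ * n₂ + n₁ * n₃ + n₂ * n₃ := by
  rw [activeSet_eq_map h₁ h₂ h₃ T, Set.ncard_coe_finset, Finset.card_map,
    card_latticeHexagon_toNat]
  exact ⟨Finset.finite_toSet _, rfl⟩

end
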